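/- arXiv:1612.00421 — 2 statements merged into one kernel-verified Lean document; each statement's English description precedes it below -/
import Mathlib

section
/- Fix 0 < ε < 1 and C₂ > 1, let N be a positive integer, and let L = (L_{ij}) be a random symmetric N×N array with entries in {A, B} whose upper-triangular entries {L_{ij}}_{1 ≤ i ≤ j ≤ N} are mutually independent and satisfy P[L_{ij} = B] ≤ C₂ N^{−1−ε/10} for all i ≤ j. Let Δ be the event that L is inadmissible, that is, that L has at least N^{1−ε/20} deviant indices or that there exist r = ⌈log log N⌉ distinct pairwise connected indices. Then there exist constants c, C > 0, depending only on C₂ and ε, such that P[Δ] < C N^{−c log log N}. -/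
open MeasureTheory ProbabilityTheory
open scoped Classical ENNReal

noncomputable section

/-- In an AB label (here `true` stands for `B` and `false` for `A`), two indices are
connected if they are joined by a finite chain of consecutively linked indices. -/
def connectedIdx {N : ℕ} (L : Fin N → Fin N → Bool) : Fin N → Fin N → Prop :=
  Relation.ReflTransGen (fun i j => L i j = true)

/-- An index is deviant if it is linked to some index. -/
def deviantIdx {N : ℕ} (L : Fin N → Fin N → Bool) (i : Fin N) : Prop :=
  ∃ j, L i j = true

/-- An AB label is inadmissible if it has at least N^{1-ε/20} deviant indices, or if there
exist ⌈log log N⌉ distinct pairwise connected indices. -/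
def Inadmissible {N : ℕ} (ε : ℝ) (L : Fin N → Fin N → Bool) : Prop :=
  ((N : ℝ) ^ (1 - ε / 20) ≤
      ((Finset.univ.filter (fun i : Fin N => deviantIdx L i)).card : ℝ)) ∨
    (∃ S : Finset (Fin N), S.card = ⌈Real.log (Real.log N)⌉₊ ∧
      ∀ i ∈ S, ∀ j ∈ S, connectedIdx L i j)

/-!
An inadmissible label contains a witness made of linked pairs: either at least
`N^{1-ε/20}/2` of them (a linked pair accounts for at most two deviant indices), or a tree of
`r - 1` linked pairs on `r = ⌈log log N⌉` vertices, grown inside the connected cluster. By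
independence a fixed set of `m` pairs is entirely linked with probability at most `p^m`, where
`p = C₂ N^{-1-ε/10}`, so a union bound over witnesses gives
`P[Δ] ≤ C(N², k) p^k + N^r 2^{r²} p^{r-1}` with `k = ⌈N^{1-ε/20}/2⌉`. The first term is at most
`(2e C₂ N^{-ε/20})^k` and the second is `N^{1+ε/10-εr/10} e^{O(r²)}` with `r² = o(log N)`; both
are eventually below `N^{-(ε/20) log log N} / 2`, and the finitely many small `N` go into `C`.
-/

open Finset Real Filter Asymptotics

/-- Unordered pairs, diagonal ones included, encoded as in the independence hypothesis. -/
abbrev UpperPair (α : Type*) [LE α] := {p : α × α // p.1 ≤ p.2}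

lemma Relation.ReflTransGen.exists_rel_mem_notMem {α : Type*} {R : α → α → Prop} {s : Set α}
    {a b : α} (h : Relation.ReflTransGen R a b) (ha : a ∈ s) (hb : b ∉ s) :
    ∃ x ∈ s, ∃ y ∉ s, R x y := by
  induction h with
  | refl => exact absurd ha hb
  | @tail c d _ hcd ih =>
    by_cases hc : c ∈ s
    · exact ⟨c, hc, d, hb, hcd⟩
    · exact ih hc

section Combinatorics

variable {α : Type*} [LinearOrder α]

def upperPair (x y : α) : UpperPair α := ⟨(min x y, max x y), min_le_max⟩

def pairsWithin [Fintype α] (V : Finset α) : Finset (UpperPair α) :=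
  univ.filter fun q => q.1.1 ∈ V ∧ q.1.2 ∈ V

def linkedPairs [Fintype α] (L : α → α → Bool) : Finset (UpperPair α) :=
  univ.filter fun q => L q.1.1 q.1.2 = true

lemma rel_upperPair {R : α → α → Prop} (hR : ∀ x y, R x y → R y x) {x y : α} (h : R x y) :
    R (upperPair x y).1.1 (upperPair x y).1.2 := by
  rcases le_total x y with hxy | hxy
  · simpa [upperPair, hxy] using h
  · simpa [upperPair, hxy] using hR x y h

lemma upperPair_mem_pairsWithin [Fintype α] {V : Finset α} {x y : α} (hx : x ∈ V) (hy : y ∈ V) :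
    upperPair x y ∈ pairsWithin V := by
  rcases le_total x y with hxy | hxy <;> simp [pairsWithin, upperPair, hxy, hx, hy]

lemma card_pairsWithin_le [Fintype α] (V : Finset α) : #(pairsWithin V) ≤ #V ^ 2 := by
  rw [sq, ← card_product]
  exact card_le_card_of_injOn Subtype.val (fun q hq => mem_product.2 (mem_filter.1 hq).2)
    Subtype.val_injective.injOn

lemma card_le_two_mul_card_linkedPairs [Fintype α] {L : α → α → Bool}
    (hL : ∀ i j, L i j = L j i) {D : Finset α} (hD : ∀ i ∈ D, ∃ j, L i j = true) :
    #D ≤ 2 * #(linkedPairs L) := by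
  have hsub : D ⊆ (linkedPairs L).image (·.1.1) ∪ (linkedPairs L).image (·.1.2) := by
    intro i hi
    obtain ⟨j, hij⟩ := hD i hi
    rcases le_total i j with h | h
    · exact mem_union_left _ <| mem_image.2 ⟨⟨(i, j), h⟩, by simpa [linkedPairs] using hij, rfl⟩
    · exact mem_union_right _ <| mem_image.2
        ⟨⟨(j, i), h⟩, by simpa [linkedPairs, hL j i] using hij, rfl⟩
  calc _ ≤ _ := card_le_card hsub
    _ ≤ _ := card_union_le _ _
    _ ≤ _ := add_le_add card_image_le card_image_le
    _ = _ := (two_mul _).symm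

lemma pairsWithin_mono [Fintype α] {V W : Finset α} (h : V ⊆ W) :
    pairsWithin V ⊆ pairsWithin W := fun q hq => by
  obtain ⟨-, h₁, h₂⟩ := mem_filter.1 hq
  exact mem_filter.2 ⟨mem_univ _, h h₁, h h₂⟩

lemma upperPair_fst_eq_or_snd_eq (x y : α) :
    (upperPair x y).1.1 = y ∨ (upperPair x y).1.2 = y := by
  rcases le_total x y with h | h <;> simp [upperPair, h]

/-- The tree is grown from a vertex of `S` one boundary edge at a time, so its vertices need not
lie in `S`. -/
lemma exists_tree_of_pairwise_reflTransGen [Fintype α] {R : α → α → Prop}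
    (hR : ∀ x y, R x y → R y x) {S : Finset α}
    (hS : ∀ i ∈ S, ∀ j ∈ S, Relation.ReflTransGen R i j) :
    ∃ V T, #V = #S ∧ #T = #S - 1 ∧ T ⊆ pairsWithin V ∧ ∀ q ∈ T, R q.1.1 q.1.2 := by
  rcases S.eq_empty_or_nonempty with rfl | ⟨v, hv⟩
  · exact ⟨∅, ∅, by simp⟩
  suffices ∀ k, 1 ≤ k → k ≤ #S → ∃ V T, v ∈ V ∧ #V = k ∧ #T = k - 1 ∧
      T ⊆ pairsWithin V ∧ ∀ q ∈ T, R q.1.1 q.1.2 by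
    obtain ⟨V, T, -, h⟩ := this #S (card_pos.2 ⟨v, hv⟩) le_rfl
    exact ⟨V, T, h⟩
  intro k hk
  induction k, hk using Nat.le_induction with
  | base => exact fun _ => ⟨{v}, ∅, by simp⟩
  | succ k _ ih =>
    intro hkS
    obtain ⟨V, T, hvV, hV, hT, hTV, hTR⟩ := ih (by omega)
    obtain ⟨u, huS, huV⟩ : ∃ u ∈ S, u ∉ V :=
      not_subset.1 fun h => by have := card_le_card h; omega
    obtain ⟨x, hx, y, hy, hxy⟩ :=
      (hS v hv u huS).exists_rel_mem_notMem (s := (V : Set α)) hvV huV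
    have hnew : upperPair x y ∉ T := fun h => by
      obtain ⟨-, h₁, h₂⟩ := mem_filter.1 (hTV h)
      rcases upperPair_fst_eq_or_snd_eq x y with e | e
      exacts [hy (e ▸ h₁), hy (e ▸ h₂)]
    refine ⟨insert y V, insert (upperPair x y) T, mem_insert_of_mem hvV,
      by rw [card_insert_of_notMem hy, hV], by rw [card_insert_of_notMem hnew, hT]; omega,
      insert_subset (upperPair_mem_pairsWithin (mem_insert_of_mem hx) (mem_insert_self y V))
        (hTV.trans (pairsWithin_mono (subset_insert y V))), ?_⟩
    exact forall_mem_insert _ _ _ |>.2 ⟨rel_upperPair hR hxy, hTR⟩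

variable (α) in
/-- Contains the edge set of every tree on `k` vertices, as `k - 1` pairs inside a `k`-set. -/
def treeFamily [Fintype α] (k : ℕ) : Finset (Finset (UpperPair α)) :=
  (univ.powersetCard k).biUnion fun V => (pairsWithin V).powersetCard (k - 1)

lemma mem_treeFamily [Fintype α] {k : ℕ} {T : Finset (UpperPair α)} :
    T ∈ treeFamily α k ↔ ∃ V : Finset α, #V = k ∧ T ⊆ pairsWithin V ∧ #T = k - 1 := by
  simp [treeFamily, mem_powersetCard]

lemma card_treeFamily_le [Fintype α] (k : ℕ) :
    #(treeFamily α k) ≤ Fintype.card α ^ k * 2 ^ k ^ 2 := by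
  have hV : ∀ V ∈ powersetCard k (univ : Finset α),
      #((pairsWithin V).powersetCard (k - 1)) ≤ 2 ^ k ^ 2 := by
    intro V hV
    rw [card_powersetCard]
    refine (Nat.choose_le_two_pow _ _).trans (Nat.pow_le_pow_right two_pos ?_)
    exact (card_pairsWithin_le V).trans_eq (by rw [mem_powersetCard_univ.1 hV])
  calc _ ≤ _ := card_biUnion_le
    _ ≤ #(powersetCard k (univ : Finset α)) * 2 ^ k ^ 2 := sum_le_card_nsmul _ _ _ hV
    _ ≤ _ := by
      rw [card_powersetCard, card_univ]
      exact Nat.mul_le_mul_right _ (Nat.choose_le_pow _ _)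

end Combinatorics

section Probability

variable {Ω ι : Type*} [MeasurableSpace Ω] {μ : Measure Ω} {X : ι → Ω → Bool} {p : ℝ}

lemma measureReal_forall_mem_le_pow (hX : iIndepFun X μ)
    (hp : ∀ i, μ.real {ω | X i ω = true} ≤ p) (T : Finset ι) :
    μ.real {ω | ∀ i ∈ T, X i ω = true} ≤ p ^ #T := by
  have hinter : {ω | ∀ i ∈ T, X i ω = true} = ⋂ i ∈ T, {ω | X i ω = true} := by ext; simp
  rw [hinter, measureReal_def, hX.meas_biInter (s := fun i => {ω | X i ω = true}) fun i _ =>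
    MeasurableSpace.measurableSet_comap.2 ⟨{true}, trivial, rfl⟩, ENNReal.toReal_prod]
  exact (prod_le_prod (fun _ _ => ENNReal.toReal_nonneg) fun i _ => hp i).trans_eq (prod_const p)

lemma measureReal_exists_forall_mem_le [IsFiniteMeasure μ] (hX : iIndepFun X μ)
    (hp : ∀ i, μ.real {ω | X i ω = true} ≤ p) {𝒜 : Finset (Finset ι)} {k : ℕ}
    (h𝒜 : ∀ T ∈ 𝒜, #T = k) :
    μ.real {ω | ∃ T ∈ 𝒜, ∀ i ∈ T, X i ω = true} ≤ #𝒜 * p ^ k := by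
  have hunion : {ω | ∃ T ∈ 𝒜, ∀ i ∈ T, X i ω = true} =
      ⋃ T ∈ 𝒜, {ω | ∀ i ∈ T, X i ω = true} := by
    ext; simp
  calc _ ≤ ∑ T ∈ 𝒜, μ.real {ω | ∀ i ∈ T, X i ω = true} :=
        hunion ▸ measureReal_biUnion_finset_le _ _
    _ ≤ ∑ _T ∈ 𝒜, p ^ k :=
        sum_le_sum fun T hT => h𝒜 T hT ▸ measureReal_forall_mem_le_pow hX hp T
    _ = _ := by rw [sum_const, nsmul_eq_mul]

end Probability

section Label

def deviantBound (ε p : ℝ) (N : ℕ) : ℝ :=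
  ((N ^ 2).choose ⌈(N : ℝ) ^ (1 - ε / 20) / 2⌉₊ : ℝ) * p ^ ⌈(N : ℝ) ^ (1 - ε / 20) / 2⌉₊

def clusterBound (p : ℝ) (N : ℕ) : ℝ :=
  (N : ℝ) ^ ⌈log (log N)⌉₊ * 2 ^ ⌈log (log N)⌉₊ ^ 2 * p ^ (⌈log (log N)⌉₊ - 1)

lemma card_upperPair_fin_le (N : ℕ) : Fintype.card (UpperPair (Fin N)) ≤ N ^ 2 :=
  (Fintype.card_subtype_le _).trans_eq (by simp [sq])

lemma measureReal_inadmissible_le {N : ℕ} {Ω : Type*} [MeasurableSpace Ω] {μ : Measure Ω}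
    [IsFiniteMeasure μ] {L : Ω → Fin N → Fin N → Bool} (hL : ∀ ω i j, L ω i j = L ω j i)
    (hind : iIndepFun (fun (q : UpperPair (Fin N)) ω => L ω q.1.1 q.1.2) μ) {ε p : ℝ}
    (hp0 : 0 ≤ p) (hp : ∀ i j, i ≤ j → μ.real {ω | L ω i j = true} ≤ p) :
    μ.real {ω | Inadmissible ε (L ω)} ≤ deviantBound ε p N + clusterBound p N := by
  set k := ⌈(N : ℝ) ^ (1 - ε / 20) / 2⌉₊
  set r := ⌈log (log N)⌉₊
  set 𝒜 := powersetCard k (univ : Finset (UpperPair (Fin N)))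
  have hp' (q : UpperPair (Fin N)) : μ.real {ω | L ω q.1.1 q.1.2 = true} ≤ p := hp _ _ q.2
  have hsub : {ω | Inadmissible ε (L ω)} ⊆
      {ω | ∃ T ∈ 𝒜, ∀ q ∈ T, L ω q.1.1 q.1.2 = true} ∪
      {ω | ∃ T ∈ treeFamily (Fin N) r, ∀ q ∈ T, L ω q.1.1 q.1.2 = true} := by
    rintro ω (hdev | ⟨S, hS, hconn⟩)
    · have hD : (#(univ.filter fun i => deviantIdx (L ω) i) : ℝ) ≤ 2 * #(linkedPairs (L ω)) := by
        exact_mod_cast card_le_two_mul_card_linkedPairs (hL ω)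
          (D := univ.filter fun i => deviantIdx (L ω) i) fun i hi => (mem_filter.1 hi).2
      have hk : k ≤ #(linkedPairs (L ω)) := Nat.ceil_le.2 (by linarith)
      obtain ⟨T, hT, hTk⟩ := exists_subset_card_eq hk
      exact Or.inl ⟨T, mem_powersetCard_univ.2 hTk, fun q hq => (mem_filter.1 (hT hq)).2⟩
    · obtain ⟨V, T, hV, hT, hTV, hTL⟩ := exists_tree_of_pairwise_reflTransGen
        (R := fun i j => L ω i j = true) (fun x y h => (hL ω y x).trans h) hconn
      exact Or.inr ⟨T, mem_treeFamily.2 ⟨V, hV.trans hS, hTV, by rw [hT, hS]⟩, hTL⟩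
  have hdev : (#𝒜 : ℝ) ≤ (N ^ 2).choose k := by
    rw [card_powersetCard, card_univ]
    exact_mod_cast Nat.choose_le_choose _ (card_upperPair_fin_le N)
  have hcluster : (#(treeFamily (Fin N) r) : ℝ) ≤ N ^ r * 2 ^ r ^ 2 := by
    exact_mod_cast (card_treeFamily_le r).trans_eq (by rw [Fintype.card_fin])
  have htree : ∀ T ∈ treeFamily (Fin N) r, #T = r - 1 := fun T hT => by
    obtain ⟨-, -, -, h⟩ := mem_treeFamily.1 hT
    exact h
  calc _ ≤ _ := measureReal_mono hsub
    _ ≤ _ := measureReal_union_le _ _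
    _ ≤ #𝒜 * p ^ k + #(treeFamily (Fin N) r) * p ^ (r - 1) :=
        add_le_add (measureReal_exists_forall_mem_le hind hp' fun T hT => mem_powersetCard_univ.1 hT)
          (measureReal_exists_forall_mem_le hind hp' htree)
    _ ≤ _ := by
      unfold deviantBound clusterBound
      gcongr

end Label

section Analysis

lemma choose_mul_pow_le (n k : ℕ) {p : ℝ} (hp : 0 ≤ p) :
    (n.choose k : ℝ) * p ^ k ≤ (exp 1 * n * p / k) ^ k := by
  rcases k.eq_zero_or_pos with rfl | hk
  · simp
  have hk' : (0 : ℝ) < k := Nat.cast_pos.2 hk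
  calc (n.choose k : ℝ) * p ^ k ≤ n ^ k / k.factorial * p ^ k := by
        gcongr; exact Nat.choose_le_pow_div k n
    _ = (n * p / k) ^ k * (k ^ k / k.factorial) := by rw [div_pow, mul_pow]; field_simp
    _ ≤ (n * p / k) ^ k * exp k := by gcongr; exact pow_div_factorial_le_exp _ hk'.le k
    _ = _ := by rw [← exp_one_pow]; ring

lemma Asymptotics.IsLittleO.eventually_le {α : Type*} {l : Filter α} {f g : α → ℝ}
    (h : f =o[l] g) (hg : ∀ᶠ x in l, 0 ≤ g x) : ∀ᶠ x in l, f x ≤ g x := by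
  filter_upwards [h.eventuallyLE, hg] with x hfg hg
  exact (le_abs_self _).trans (by simpa [abs_of_nonneg hg] using hfg)

lemma isLittleO_log_log_add_one_rpow {a : ℝ} (ha : 0 < a) (c : ℝ) :
    (fun x => c * log (log x) + 1) =o[atTop] fun x => x ^ a := by
  have hloglog : (fun x => log (log x)) =o[atTop] fun x => x ^ a :=
    (isLittleO_log_id_atTop.comp_tendsto tendsto_log_atTop).trans (isLittleO_log_rpow_atTop ha)
  exact (hloglog.const_mul_left c).add <| (isLittleO_one_left_iff ℝ).2 <|
    tendsto_norm_atTop_atTop.comp (tendsto_rpow_atTop ha)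

lemma isLittleO_log_add_one_sq_mul_add (c d : ℝ) :
    (fun y => (log y + 1) ^ 2 * c + d) =o[atTop] id := by
  have h : (fun y => (log y + 1) ^ 2) =o[atTop] id := by
    have := ((isLittleO_pow_log_id_atTop (n := 2)).add
      (isLittleO_log_id_atTop.const_mul_left 2)).add (isLittleO_const_id_atTop (1 : ℝ))
    exact this.congr_left fun y => by ring
  exact (h.mul_isBigO (isBigO_const_const c one_ne_zero atTop)).congr_right (by simp) |>.add
    (isLittleO_const_id_atTop d)

lemma deviantBound_le {ε K : ℝ} {N : ℕ} (hε0 : 0 < ε) (hK : 0 ≤ K) (hx2 : 2 ≤ (N : ℝ))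
    (hKN : 2 * exp 1 * K ≤ (N : ℝ) ^ (ε / 40))
    (hlog : ε / 20 * log (log N) + 1 ≤ ε / 80 * (N : ℝ) ^ (1 - ε / 20)) :
    deviantBound ε (K * (N : ℝ) ^ (-(1 : ℝ) - ε / 10)) N ≤
      (N : ℝ) ^ (-(ε / 20 * log (log N))) / 2 := by
  set x : ℝ := (N : ℝ)
  set k := ⌈x ^ (1 - ε / 20) / 2⌉₊
  have hx0 : 0 < x := by linarith
  have hk : x ^ (1 - ε / 20) / 2 ≤ k := Nat.le_ceil _
  have hbase : exp 1 * ((N ^ 2 : ℕ) : ℝ) * (K * x ^ (-(1 : ℝ) - ε / 10)) / k ≤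
      x ^ (-(ε / 40)) := by
    have hexp : x ^ (2 : ℝ) * x ^ (-(1 : ℝ) - ε / 10) / x ^ (1 - ε / 20) * x ^ (ε / 40) =
        x ^ (-(ε / 40)) := by
      rw [← rpow_add hx0, ← rpow_sub hx0, ← rpow_add hx0]; ring_nf
    calc _ ≤ exp 1 * x ^ (2 : ℝ) * (K * x ^ (-(1 : ℝ) - ε / 10)) / (x ^ (1 - ε / 20) / 2) := by
          push_cast; rw [rpow_two]; gcongr
      _ = 2 * exp 1 * K * (x ^ (2 : ℝ) * x ^ (-(1 : ℝ) - ε / 10) / x ^ (1 - ε / 20)) := by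
          field_simp
      _ ≤ x ^ (ε / 40) * (x ^ (2 : ℝ) * x ^ (-(1 : ℝ) - ε / 10) / x ^ (1 - ε / 20)) := by
          gcongr
      _ = _ := by rw [mul_comm, hexp]
  have hkε : ε / 20 * log (log x) + 1 ≤ ε / 40 * k := by nlinarith
  calc deviantBound ε (K * x ^ (-(1 : ℝ) - ε / 10)) N
      ≤ (exp 1 * ((N ^ 2 : ℕ) : ℝ) * (K * x ^ (-(1 : ℝ) - ε / 10)) / k) ^ k :=
        choose_mul_pow_le _ _ (by positivity)
    _ ≤ (x ^ (-(ε / 40))) ^ k := by gcongr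
    _ = x ^ (-(ε / 40 * k)) := by rw [← rpow_natCast, ← rpow_mul hx0.le]; ring_nf
    _ ≤ x ^ (-(ε / 20 * log (log x) + 1)) := by gcongr; linarith
    _ = x ^ (-(ε / 20 * log (log x))) * x⁻¹ := by rw [← rpow_neg_one, ← rpow_add hx0]; ring_nf
    _ ≤ x ^ (-(ε / 20 * log (log x))) / 2 := by
        rw [div_eq_mul_inv]
        exact mul_le_mul_of_nonneg_left (inv_anti₀ two_pos hx2) (by positivity)

lemma eventually_deviantBound_le {ε K : ℝ} (hε0 : 0 < ε) (hε20 : ε < 20) (hK : 0 ≤ K) :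
    ∀ᶠ N : ℕ in atTop, deviantBound ε (K * (N : ℝ) ^ (-(1 : ℝ) - ε / 10)) N ≤
      (N : ℝ) ^ (-(ε / 20 * log (log N))) / 2 := by
  have ha : 0 < 1 - ε / 20 := by linarith
  have hx : ∀ᶠ x : ℝ in atTop, 2 ≤ x ∧ 2 * exp 1 * K ≤ x ^ (ε / 40) ∧
      ε / 20 * log (log x) + 1 ≤ ε / 80 * x ^ (1 - ε / 20) := by
    refine (eventually_ge_atTop 2).and <|
      ((tendsto_rpow_atTop (by positivity)).eventually_ge_atTop _).and ?_
    refine ((isLittleO_const_mul_right_iff (by positivity)).2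
      (isLittleO_log_log_add_one_rpow ha (ε / 20))).eventually_le ?_
    filter_upwards [eventually_ge_atTop 0] with x hx using by positivity
  filter_upwards [tendsto_natCast_atTop_atTop.eventually hx] with N ⟨hx2, hKN, hlog⟩
  exact deviantBound_le hε0 hK hx2 hKN hlog

lemma clusterBound_le {ε K : ℝ} {N : ℕ} (hε0 : 0 < ε) (hK : 1 ≤ K) (hx1 : 1 < (N : ℝ))
    (hsmall : (log (log N) + 1) ^ 2 * log (2 * K) + log 2 ≤ log N)
    (hlarge : 40 / ε + 2 ≤ log (log N)) :
    clusterBound (K * (N : ℝ) ^ (-(1 : ℝ) - ε / 10)) N ≤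
      (N : ℝ) ^ (-(ε / 20 * log (log N))) / 2 := by
  set x : ℝ := (N : ℝ)
  set l := log (log x)
  set r := ⌈l⌉₊
  have hx0 : 0 < x := by linarith
  have hl : 2 ≤ l := by linarith [show 0 < 40 / ε by positivity]
  have hlr : l ≤ r := Nat.le_ceil l
  have hrl : (r : ℝ) ≤ l + 1 := (Nat.ceil_lt_add_one (by linarith)).le
  have hr1 : 1 ≤ r := Nat.one_le_cast.1 (show (1 : ℝ) ≤ r by linarith)
  have hlog2K : 0 ≤ log (2 * K) := log_nonneg (by linarith)
  have hpow : (2 : ℝ) ^ r ^ 2 * K ^ (r - 1) ≤ x / 2 := by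
    have hrr : r - 1 ≤ r ^ 2 := (Nat.sub_le r 1).trans (Nat.le_self_pow two_ne_zero r)
    calc (2 : ℝ) ^ r ^ 2 * K ^ (r - 1) ≤ 2 ^ r ^ 2 * K ^ r ^ 2 := by gcongr
      _ = exp (((r ^ 2 : ℕ) : ℝ) * log (2 * K)) := by
          rw [exp_nat_mul, exp_log (by positivity), mul_pow]
      _ ≤ exp ((l + 1) ^ 2 * log (2 * K)) := by
          gcongr; push_cast; exact pow_le_pow_left₀ (Nat.cast_nonneg r) hrl 2
      _ ≤ exp (log x - log 2) := by gcongr; linarith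
      _ = x / 2 := by rw [exp_sub, exp_log hx0, exp_log two_pos]
  have hsplit : clusterBound (K * x ^ (-(1 : ℝ) - ε / 10)) N =
      (2 ^ r ^ 2 * K ^ (r - 1)) * x ^ ((r : ℝ) + (-(1 : ℝ) - ε / 10) * (r - 1 : ℕ)) := by
    rw [clusterBound, mul_pow, ← rpow_natCast (x ^ _), ← rpow_mul hx0.le, rpow_add hx0,
      rpow_natCast]
    ring
  have hexp : 1 + ((r : ℝ) + (-(1 : ℝ) - ε / 10) * (r - 1 : ℕ)) ≤ -(ε / 20 * l) := by
    rw [Nat.cast_sub hr1, Nat.cast_one]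
    have : 40 / ε * ε = 40 := div_mul_cancel₀ _ hε0.ne'
    nlinarith
  calc clusterBound (K * x ^ (-(1 : ℝ) - ε / 10)) N
      ≤ x / 2 * x ^ ((r : ℝ) + (-(1 : ℝ) - ε / 10) * (r - 1 : ℕ)) := by
        rw [hsplit]; gcongr
    _ = x ^ (1 + ((r : ℝ) + (-(1 : ℝ) - ε / 10) * (r - 1 : ℕ))) / 2 := by
        rw [rpow_add hx0 1, rpow_one]; ring
    _ ≤ x ^ (-(ε / 20 * l)) / 2 := by gcongr; exact hx1.le

lemma eventually_clusterBound_le {ε K : ℝ} (hε0 : 0 < ε) (hK : 1 ≤ K) :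
    ∀ᶠ N : ℕ in atTop, clusterBound (K * (N : ℝ) ^ (-(1 : ℝ) - ε / 10)) N ≤
      (N : ℝ) ^ (-(ε / 20 * log (log N))) / 2 := by
  have hx : ∀ᶠ x : ℝ in atTop, 1 < x ∧
      (log (log x) + 1) ^ 2 * log (2 * K) + log 2 ≤ log x ∧
      40 / ε + 2 ≤ log (log x) := by
    refine (eventually_gt_atTop 1).and <| .and ?_ <|
      (tendsto_log_atTop.comp tendsto_log_atTop).eventually_ge_atTop _
    refine tendsto_log_atTop.eventually <|
      (isLittleO_log_add_one_sq_mul_add (log (2 * K)) (log 2)).eventually_le ?_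
    exact eventually_ge_atTop 0
  filter_upwards [tendsto_natCast_atTop_atTop.eventually hx] with N ⟨hx1, hsmall, hlarge⟩
  exact clusterBound_le hε0 hK hx1 hsmall hlarge

lemma exists_pos_forall_lt_mul {g : ℕ → ℝ} (hg : ∀ n, 0 < n → 0 < g n) (N₀ : ℕ) :
    ∃ C > 0, ∀ n, 0 < n → ∀ x ≤ 1, (N₀ ≤ n → x ≤ g n) → x < C * g n := by
  set S := ∑ m ∈ range N₀, |g m|⁻¹
  have hS : 0 ≤ S := by positivity
  refine ⟨2 + S, by positivity, fun n hn x hx1 hxg => ?_⟩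
  have hgn := hg n hn
  by_cases hn₀ : N₀ ≤ n
  · calc x ≤ g n := hxg hn₀
      _ < (2 + S) * g n := lt_mul_left hgn (by linarith)
  · have hle : |g n|⁻¹ ≤ S :=
      single_le_sum (f := fun m => |g m|⁻¹) (fun m _ => by positivity) (mem_range.2 (by omega))
    rw [abs_of_pos hgn] at hle
    calc x ≤ 1 := hx1
      _ = (g n)⁻¹ * g n := (inv_mul_cancel₀ hgn.ne').symm
      _ < (2 + S) * g n := by gcongr; linarith

end Analysis

theorem inadmissible_label_unlikely_general
    (ε C₂ : ℝ) (hε0 : 0 < ε) (hε1 : ε < 1) :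
    ∃ c C : ℝ, 0 < c ∧ 0 < C ∧
      ∀ (N : ℕ), 0 < N →
      ∀ (Ω : Type) (mΩ : MeasurableSpace Ω) (μ : Measure Ω), IsProbabilityMeasure μ →
      ∀ L : Ω → Fin N → Fin N → Bool,
        (∀ ω i j, L ω i j = L ω j i) →
        (∀ i j, Measurable fun ω => L ω i j) →
        iIndepFun
          (fun (p : {p : Fin N × Fin N // p.1 ≤ p.2}) ω => L ω p.1.1 p.1.2) μ →
        (∀ i j : Fin N, i ≤ j →
          (μ {ω | L ω i j = true}).toReal ≤ C₂ * (N : ℝ) ^ (-(1 : ℝ) - ε / 10)) →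
        (μ {ω | Inadmissible ε (L ω)}).toReal <
          C * (N : ℝ) ^ (-(c * Real.log (Real.log N))) := by
  set K := max C₂ 1
  obtain ⟨N₀, hN₀⟩ := eventually_atTop.1 <|
    (eventually_deviantBound_le hε0 (by linarith) (zero_le_one.trans (le_max_right C₂ 1))).and
      (eventually_clusterBound_le hε0 (le_max_right C₂ 1))
  obtain ⟨C, hC, hlt⟩ := exists_pos_forall_lt_mul
    (g := fun N : ℕ => (N : ℝ) ^ (-(ε / 20 * log (log N))))
    (fun N hN => rpow_pos_of_pos (Nat.cast_pos.2 hN) _) N₀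
  refine ⟨ε / 20, C, by positivity, hC, fun N hN Ω _ μ _ L hL _ hind hp => ?_⟩
  refine hlt N hN _ measureReal_le_one fun hN₀N => ?_
  have hpK (i j : Fin N) (hij : i ≤ j) :
      μ.real {ω | L ω i j = true} ≤ K * (N : ℝ) ^ (-(1 : ℝ) - ε / 10) :=
    (hp i j hij).trans (by gcongr; exact le_max_left C₂ 1)
  calc _ ≤ _ := measureReal_inadmissible_le hL hind (by positivity) hpK
    _ ≤ _ := add_le_add (hN₀ N hN₀N).1 (hN₀ N hN₀N).2
    _ = _ := add_halves _

theorem inadmissible_label_unlikely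
    (ε C₂ : ℝ) (hε0 : 0 < ε) (hε1 : ε < 1) (hC₂ : 1 < C₂) :
    ∃ c C : ℝ, 0 < c ∧ 0 < C ∧
      ∀ (N : ℕ), 0 < N →
      ∀ (Ω : Type) (mΩ : MeasurableSpace Ω) (μ : Measure Ω), IsProbabilityMeasure μ →
      ∀ L : Ω → Fin N → Fin N → Bool,
        (∀ ω i j, L ω i j = L ω j i) →
        (∀ i j, Measurable fun ω => L ω i j) →
        iIndepFun
          (fun (p : {p : Fin N × Fin N // p.1 ≤ p.2}) ω => L ω p.1.1 p.1.2) μ →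
        (∀ i j : Fin N, i ≤ j →
          (μ {ω | L ω i j = true}).toReal ≤ C₂ * (N : ℝ) ^ (-(1 : ℝ) - ε / 10)) →
        (μ {ω | Inadmissible ε (L ω)}).toReal <
          C * (N : ℝ) ^ (-(c * Real.log (Real.log N))) :=
  inadmissible_label_unlikely_general ε C₂ hε0 hε1
end
end

section
/- Fix E ∈ ℝ, real numbers η, η' > 0, a positive integer N, and an N×N real symmetric matrix H. Set z = E + iη and z' = E + i(η + η'), and let G = (H − z)^{−1} with entries G_{jk} and G' = (H − z')^{−1} with entries G'_{jk}. Then for all j, k ∈ [1, N], |G'_{jk} − G_{jk}| ≤ (η'/(2η)) ( |Im G'_{jj}| + |Im G_{kk}| ). -/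
/-!
The resolvent identity `G' - G = (z' - z) G' G` and termwise AM–GM give
`|G'_{jk} - G_{jk}| ≤ (η' / 2) (∑ₗ |G'_{jl}|² + ∑ₗ |G_{lk}|²)`. The Ward identity
`Im G_{jj} = Im z · ∑ₗ |G_{jl}|²` (and its column version), obtained from the resolvent identity
at `z` and `z̄` since `G(z̄) = G(z)ᴴ`, identifies the two sums with
`Im G'_{jj} / (η + η') ≤ Im G'_{jj} / η` and `Im G_{kk} / η`.
-/

noncomputable section

/-- Resolvent of a real matrix at a complex spectral parameter. -/
def resMat {m : Type*} [Fintype m] [DecidableEq m] (A : Matrix m m ℝ) (z : ℂ) :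
    Matrix m m ℂ :=
  ((A.map (fun x => (x : ℂ))) - z • (1 : Matrix m m ℂ))⁻¹

open Complex ComplexConjugate

theorem norm_sum_mul_le_half_sum_sq_add_sum_sq {ι R : Type*} [SeminormedRing R]
    (s : Finset ι) (f g : ι → R) :
    ‖∑ i ∈ s, f i * g i‖ ≤ (∑ i ∈ s, ‖f i‖ ^ 2 + ∑ i ∈ s, ‖g i‖ ^ 2) / 2 := by
  rw [← Finset.sum_add_distrib, Finset.sum_div]
  refine (norm_sum_le _ _).trans (Finset.sum_le_sum fun i _ => ?_)
  nlinarith [norm_mul_le (f i) (g i), two_mul_le_add_sq ‖f i‖ ‖g i‖]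

namespace Matrix

variable {n : Type*} [Fintype n] [DecidableEq n]

theorem inv_sub_smul_one_sub_inv_sub_smul_one {α : Type*} [CommRing α] (A : Matrix n n α)
    {z w : α} (hz : IsUnit (A - z • 1)) (hw : IsUnit (A - w • 1)) :
    (A - w • 1)⁻¹ - (A - z • 1)⁻¹ = (w - z) • ((A - w • 1)⁻¹ * (A - z • 1)⁻¹) := by
  rw [inv_sub_inv (iff_of_true hw hz), sub_sub_sub_cancel_left, ← sub_smul, Matrix.mul_smul,
    Matrix.mul_one, Matrix.smul_mul]

variable {A : Matrix n n ℂ}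

theorem IsHermitian.isUnit_sub_smul_one (hA : A.IsHermitian) {z : ℂ} (hz : z.im ≠ 0) :
    IsUnit (A - z • 1) := by
  have hzσ : z ∉ spectrum ℂ A := by
    rw [hA.spectrum_eq_image_range]
    rintro ⟨x, -, rfl⟩
    simp at hz
  rw [spectrum.mem_iff, not_not, Algebra.algebraMap_eq_smul_one] at hzσ
  simpa using hzσ.neg

theorem IsHermitian.conjTranspose_inv_sub_smul_one (hA : A.IsHermitian) (z : ℂ) :
    (A - z • 1)⁻¹ᴴ = (A - conj z • 1)⁻¹ := by
  rw [conjTranspose_nonsing_inv, conjTranspose_sub, hA.eq, conjTranspose_smul,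
    conjTranspose_one]
  rfl

theorem IsHermitian.ward_identity_row (hA : A.IsHermitian) {z : ℂ} (hz : z.im ≠ 0) (j : n) :
    ((A - z • 1)⁻¹ j j).im = z.im * ∑ l, ‖(A - z • 1)⁻¹ j l‖ ^ 2 := by
  have h := inv_sub_smul_one_sub_inv_sub_smul_one A
    (hA.isUnit_sub_smul_one (z := conj z) (by simpa using hz)) (hA.isUnit_sub_smul_one hz)
  rw [← hA.conjTranspose_inv_sub_smul_one] at h
  have h_im := congrArg (fun M => (M j j).im) h
  simp only [sub_apply, smul_apply, mul_apply, conjTranspose_apply, RCLike.star_def,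
    Complex.mul_conj', ← ofReal_pow, ← ofReal_sum, smul_eq_mul, sub_im, conj_im, mul_im, sub_re,
    conj_re, ofReal_re, ofReal_im] at h_im
  linarith

theorem IsHermitian.ward_identity_col (hA : A.IsHermitian) {z : ℂ} (hz : z.im ≠ 0) (k : n) :
    ((A - z • 1)⁻¹ k k).im = z.im * ∑ l, ‖(A - z • 1)⁻¹ l k‖ ^ 2 := by
  have h := inv_sub_smul_one_sub_inv_sub_smul_one A
    (hA.isUnit_sub_smul_one hz) (hA.isUnit_sub_smul_one (z := conj z) (by simpa using hz))
  rw [← hA.conjTranspose_inv_sub_smul_one] at h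
  have h_im := congrArg (fun M => (M k k).im) h
  simp only [sub_apply, smul_apply, mul_apply, conjTranspose_apply, RCLike.star_def,
    Complex.conj_mul', ← ofReal_pow, ← ofReal_sum, smul_eq_mul, sub_im, conj_im, mul_im, sub_re,
    conj_re, ofReal_re, ofReal_im] at h_im
  linarith

theorem IsHermitian.norm_inv_sub_smul_one_apply_sub_le (hA : A.IsHermitian) {z w : ℂ}
    (hz : z.im ≠ 0) (hw : w.im ≠ 0) (j k : n) :
    ‖(A - w • 1)⁻¹ j k - (A - z • 1)⁻¹ j k‖ ≤
      ‖w - z‖ * ((∑ l, ‖(A - w • 1)⁻¹ j l‖ ^ 2 + ∑ l, ‖(A - z • 1)⁻¹ l k‖ ^ 2) / 2) := by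
  have h := inv_sub_smul_one_sub_inv_sub_smul_one A
    (hA.isUnit_sub_smul_one hz) (hA.isUnit_sub_smul_one hw)
  rw [← sub_apply, h, smul_apply, mul_apply, smul_eq_mul, norm_mul]
  gcongr
  exact norm_sum_mul_le_half_sum_sq_add_sum_sq _ _ _

end Matrix

open Matrix

theorem resolvent_continuity_general
    (E η η' : ℝ) (hη : 0 < η) (hη' : 0 < η')
    (N : ℕ)
    (H : Matrix (Fin N) (Fin N) ℝ) (hH : H.IsSymm) :
    ∀ j k : Fin N,
      ‖resMat H ((E : ℂ) + (η + η') * Complex.I) j k -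
          resMat H ((E : ℂ) + η * Complex.I) j k‖ ≤
        η' / (2 * η) *
          (|(resMat H ((E : ℂ) + (η + η') * Complex.I) j j).im| +
            |(resMat H ((E : ℂ) + η * Complex.I) k k).im|) := by
  intro j k
  have hA : (H.map ((↑) : ℝ → ℂ)).IsHermitian :=
    (isHermitian_iff_isSymm.mpr hH).map _ fun x => (conj_ofReal x).symm
  set z : ℂ := E + η * I
  set z' : ℂ := E + (η + η') * I
  have hz : z.im = η := by simp [z]
  have hz' : z'.im = η + η' := by simp [z']
  have hz'z : ‖z' - z‖ = η' := by simp [z, z', add_sub_add_left_eq_sub, ← sub_mul, abs_of_pos hη']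
  set a := ∑ l, ‖resMat H z' j l‖ ^ 2
  set b := ∑ l, ‖resMat H z l k‖ ^ 2
  have ha : (resMat H z' j j).im = (η + η') * a := by
    rw [← hz']; exact hA.ward_identity_row (by rw [hz']; positivity) j
  have hb : (resMat H z k k).im = η * b := by
    rw [← hz]; exact hA.ward_identity_col (by rw [hz]; positivity) k
  calc ‖resMat H z' j k - resMat H z j k‖
      ≤ η' * ((a + b) / 2) := by
        rw [← hz'z]
        exact hA.norm_inv_sub_smul_one_apply_sub_le (by rw [hz]; positivity)
          (by rw [hz']; positivity) j k
    _ = η' / (2 * η) * (η * a + η * b) := by field_simp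
    _ ≤ η' / (2 * η) * (|(resMat H z' j j).im| + |(resMat H z k k).im|) := by
        have : 0 ≤ a := by positivity
        rw [ha, hb, abs_of_nonneg (by positivity), abs_of_nonneg (by positivity)]
        gcongr
        linarith

theorem resolvent_continuity
    (E η η' : ℝ) (hη : 0 < η) (hη' : 0 < η')
    (N : ℕ) (hN : 0 < N)
    (H : Matrix (Fin N) (Fin N) ℝ) (hH : H.IsSymm) :
    ∀ j k : Fin N,
      ‖resMat H ((E : ℂ) + (η + η') * Complex.I) j k -
          resMat H ((E : ℂ) + η * Complex.I) j k‖ ≤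
        η' / (2 * η) *
          (|(resMat H ((E : ℂ) + (η + η') * Complex.I) j j).im| +
            |(resMat H ((E : ℂ) + η * Complex.I) k k).im|) :=
  resolvent_continuity_general E η η' hη hη' N H hH
end
end
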